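/- Let ρ be a Borel probability measure on ℝ with unbounded support, and let E_ρ be the associated position observable on L²(ℝ). Then for every compact set X ⊆ ℝ, sup_{x∈ℝ} ρ(X − x) < 1, and hence ‖E_ρ(X)‖ < 1. -/
import Mathlib


open MeasureTheory Complex
open scoped ENNReal

noncomputable section

/-- `L²(ℝ)` with Lebesgue measure. -/
abbrev L2 : Type := Lp ℂ 2 (volume : Measure ℝ)

/-- `T` is the operator of multiplication by the bounded function `x ↦ ρ(X − x)`. -/
def IsMulByMeas (ρ : Measure ℝ) (X : Set ℝ) (T : L2 →L[ℂ] L2) : Prop :=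
  ∀ f : L2, (T f : ℝ → ℂ) =ᵐ[volume]
    fun x => ((ρ ((· + x) ⁻¹' X)).toReal : ℂ) * (f : ℝ → ℂ) x

/-- if `ρ` has unbounded support (no bounded set carries full measure), then
for every compact `X`, `sup_x ρ(X − x) < 1`, hence `‖E_ρ(X)‖ < 1`. -/
theorem stmt17 (ρ : Measure ℝ) [IsProbabilityMeasure ρ]
    (hsupp : ∀ B : Set ℝ, Bornology.IsBounded B → ρ B < 1)
    (E : Set ℝ → (L2 →L[ℂ] L2))
    (hE : ∀ X : Set ℝ, MeasurableSet X → IsMulByMeas ρ X (E X))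
    (X : Set ℝ) (hX : IsCompact X) :
    (⨆ x : ℝ, ρ ((· + x) ⁻¹' X)) < 1 ∧ ‖E X‖ < 1 := by
  have hXm : MeasurableSet X := hX.isClosed.measurableSet
  obtain ⟨R, hR⟩ := hX.isBounded.subset_closedBall 0
  -- Part 1: the supremum is < 1
  have hsup : (⨆ x : ℝ, ρ ((· + x) ⁻¹' X)) < 1 := by
    by_cases hex : ∃ x₀ : ℝ, 1/2 < ρ ((· + x₀) ⁻¹' X)
    · obtain ⟨x₀, hx₀⟩ := hex
      set B : Set ℝ := Metric.closedBall 0 (3 * R + |x₀|) with hB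
      have hRnonneg : 0 ≤ R := by
        have hne : ((· + x₀) ⁻¹' X).Nonempty := by
          rcases Set.eq_empty_or_nonempty ((· + x₀) ⁻¹' X) with h | h
          · rw [h] at hx₀; simp at hx₀
          · exact h
        obtain ⟨y, hy⟩ := hne
        have := hR hy
        simp only [Metric.mem_closedBall, dist_zero_right] at this
        exact le_trans (norm_nonneg _) this
      have hbd : ∀ x : ℝ, ρ ((· + x) ⁻¹' X) ≤ max (1/2) (ρ B) := by
        intro x
        rcases le_or_gt (ρ ((· + x) ⁻¹' X)) (1/2) with h | h
        · exact le_max_of_le_left h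
        · -- the two translates must intersect
          have hinter : (((· + x) ⁻¹' X) ∩ ((· + x₀) ⁻¹' X)).Nonempty := by
            rw [Set.nonempty_iff_ne_empty]
            intro hemp
            have hm0 : MeasurableSet ((· + x₀) ⁻¹' X) :=
              hXm.preimage (measurable_add_const x₀)
            have huni := measure_union_add_inter ((· + x) ⁻¹' X) hm0 (μ := ρ)
            rw [hemp] at huni
            simp only [measure_empty, add_zero] at huni
            have h1 : (1 : ℝ≥0∞) < ρ (((· + x) ⁻¹' X) ∪ ((· + x₀) ⁻¹' X)) := by
              rw [huni]
              calc (1 : ℝ≥0∞) = 1/2 + 1/2 := by rw [ENNReal.add_halves]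
                _ < _ := ENNReal.add_lt_add h hx₀
            exact absurd (prob_le_one) (not_le.mpr h1)
          obtain ⟨y, hy1, hy2⟩ := hinter
          have hd1 : |y + x| ≤ R := by
            have := hR hy1
            simpa [Metric.mem_closedBall, dist_zero_right, Real.norm_eq_abs] using this
          have hd2 : |y + x₀| ≤ R := by
            have := hR hy2
            simpa [Metric.mem_closedBall, dist_zero_right, Real.norm_eq_abs] using this
          have hxx0 : |x - x₀| ≤ 2 * R := by
            have : x - x₀ = (y + x) - (y + x₀) := by ring
            rw [this]
            calc |(y + x) - (y + x₀)| ≤ |y + x| + |y + x₀| := abs_sub _ _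
              _ ≤ R + R := add_le_add hd1 hd2
              _ = 2 * R := by ring
          have hsub : ((· + x) ⁻¹' X) ⊆ B := by
            intro z hz
            have hzX : |z + x| ≤ R := by
              have := hR hz
              simpa [Metric.mem_closedBall, dist_zero_right, Real.norm_eq_abs] using this
            simp only [hB, Metric.mem_closedBall, dist_zero_right, Real.norm_eq_abs]
            calc |z| = |(z + x) - (x - x₀) - x₀| := by ring_nf
              _ ≤ |z + x| + |x - x₀| + |x₀| := by
                  calc |(z + x) - (x - x₀) - x₀| ≤ |(z + x) - (x - x₀)| + |x₀| := abs_sub _ _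
                    _ ≤ |z + x| + |x - x₀| + |x₀| := by
                        gcongr; exact abs_sub _ _
              _ ≤ R + 2 * R + |x₀| := by gcongr
              _ = 3 * R + |x₀| := by ring
          exact le_max_of_le_right (measure_mono hsub)
      have hBbd : Bornology.IsBounded B := Metric.isBounded_closedBall
      have : (⨆ x : ℝ, ρ ((· + x) ⁻¹' X)) ≤ max (1/2) (ρ B) := iSup_le hbd
      refine lt_of_le_of_lt this (max_lt ?_ (hsupp B hBbd))
      simp [ENNReal.div_lt_iff, one_lt_two]
    · push_neg at hex
      refine lt_of_le_of_lt (iSup_le hex) ?_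
      simp [ENNReal.div_lt_iff, one_lt_two]
  refine ⟨hsup, ?_⟩
  -- Part 2: operator norm bound
  set s : ℝ≥0∞ := ⨆ x : ℝ, ρ ((· + x) ⁻¹' X) with hs
  have hsne : s ≠ ∞ := ne_top_of_lt (lt_of_lt_of_le hsup le_top)
  set c : ℝ := s.toReal with hc
  have hc0 : 0 ≤ c := ENNReal.toReal_nonneg
  have hc1 : c < 1 := by
    have := ENNReal.toReal_lt_toReal hsne (by norm_num : (1:ℝ≥0∞) ≠ ∞)
    simpa using this.mpr hsup
  have hbound : ∀ f : L2, ‖E X f‖ ≤ c * ‖f‖ := by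
    intro f
    have h := hE X hXm f
    have hle : ‖E X f‖ ≤ ‖((c : ℂ) • f : L2)‖ := by
      rw [Lp.norm_def, Lp.norm_def]
      apply ENNReal.toReal_mono (Lp.eLpNorm_ne_top _)
      calc eLpNorm (E X f : ℝ → ℂ) 2 volume
          = eLpNorm (fun x => ((ρ ((· + x) ⁻¹' X)).toReal : ℂ) * (f : ℝ → ℂ) x) 2 volume :=
            eLpNorm_congr_ae h
        _ ≤ eLpNorm (fun x => (c : ℂ) * (f : ℝ → ℂ) x) 2 volume := by
            apply eLpNorm_mono
            intro x
            rw [norm_mul, norm_mul]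
            apply mul_le_mul_of_nonneg_right _ (norm_nonneg _)
            rw [Complex.norm_real, Complex.norm_real,
              Real.norm_eq_abs, Real.norm_eq_abs,
              _root_.abs_of_nonneg ENNReal.toReal_nonneg, _root_.abs_of_nonneg hc0]
            exact ENNReal.toReal_mono hsne (le_iSup (fun x => ρ ((· + x) ⁻¹' X)) x)
        _ = eLpNorm (((c : ℂ) • f : L2) : ℝ → ℂ) 2 volume := by
            apply eLpNorm_congr_ae
            filter_upwards [Lp.coeFn_smul (c : ℂ) f] with x hx
            rw [hx, Pi.smul_apply, smul_eq_mul]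
    calc ‖E X f‖ ≤ ‖((c : ℂ) • f : L2)‖ := hle
      _ = c * ‖f‖ := by
          rw [norm_smul, Complex.norm_real, Real.norm_eq_abs, _root_.abs_of_nonneg hc0]
  have : ‖E X‖ ≤ c := ContinuousLinearMap.opNorm_le_bound _ hc0 hbound
  exact lt_of_le_of_lt this hc1
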